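/- Let f_1 : D → V_b be a linear map, f̂_1 ∈ End(D) the induced endomorphism, y = z̄ + f̂_1, E ⊆ ℂ the set of eigenvalues of y, and for e ∈ E let pr_e : D → D be the projection onto the generalized e-eigenspace of y (so Σ_{e∈E} pr_e = Id_D and (y − e)∘pr_e is nilpotent). Define the ℂ-linear map Ψ : 𝓛_b → ℂ(z)^m by Ψ(u) = u + Σ_{e∈E} Σ_{k≥1} (z − e)^{−k} · ι(f_1((y − e·Id)^{k−1} pr_e(ū))), where ū is the class of u in D and ι : V_b ↪ ℂ(z)^m is the inclusion (the inner sums are finite since (y − e)∘pr_e is nilpotent). Then the image ψ(y) := Ψ(𝓛_b) is a ℂ[z]-lattice in ℂ(z)^m which contains L_0 and satisfies dim_ℂ ψ(y)/L_0 = N. -/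

import Mathlib

set_option synthInstance.maxHeartbeats 400000
set_option maxHeartbeats 1000000

namespace GrassRat

noncomputable section

variable (m : ℕ) (b : Fin m → ℕ)

/-- `ℂ(z)^m`. -/
abbrev Rm : Type := Fin m → RatFunc ℂ

/-- The coefficient-extraction map `ℂ(z) → ℂ((z)) → ℂ` (Laurent expansion at `0`),
as a `ℂ`-linear map into Laurent series. -/
def coeL : RatFunc ℂ →ₗ[ℂ] LaurentSeries ℂ where
  toFun := fun v => (v : LaurentSeries ℂ)
  map_add' := fun u v => by simp
  map_smul' := fun r v => by
    rw [RatFunc.smul_eq_C_mul, map_mul, ← HahnSeries.C_mul_eq_smul, ← RatFunc.algebraMap_C]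
    have := RatFunc.coe_coe (Polynomial.C r)
    simp only [Polynomial.coe_C, HahnSeries.ofPowerSeries_C] at this
    rw [RingHom.id_apply, this]; rfl

/-- `L_0 = ℂ[z]^m ⊆ ℂ(z)^m`. -/
def L0R : Submodule (Polynomial ℂ) (Rm m) where
  carrier := {v | ∀ i, ∃ p : Polynomial ℂ, v i = algebraMap (Polynomial ℂ) (RatFunc ℂ) p}
  add_mem' := by
    intro u v hu hv i
    obtain ⟨p, hp⟩ := hu i
    obtain ⟨q, hq⟩ := hv i
    exact ⟨p + q, by simp [hp, hq]⟩
  zero_mem' := by intro i; exact ⟨0, by simp⟩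
  smul_mem' := by
    intro r v hv i
    obtain ⟨p, hp⟩ := hv i
    refine ⟨r * p, ?_⟩
    have : (r • v) i = r • (v i) := rfl
    rw [this, hp, Algebra.smul_def, map_mul]

/-- `𝓛_b = ⊕_i ℂ[z]·z^{−b_i} e_i ⊆ ℂ(z)^m`. -/
def LbR : Submodule (Polynomial ℂ) (Rm m) where
  carrier := {v | ∀ i, ∃ p : Polynomial ℂ,
    v i = algebraMap (Polynomial ℂ) (RatFunc ℂ) p / (RatFunc.X ^ (b i))}
  add_mem' := by
    intro u v hu hv i
    obtain ⟨p, hp⟩ := hu i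
    obtain ⟨q, hq⟩ := hv i
    exact ⟨p + q, by rw [map_add, add_div, ← hp, ← hq]; rfl⟩
  zero_mem' := by intro i; exact ⟨0, by simp⟩
  smul_mem' := by
    intro r v hv i
    obtain ⟨p, hp⟩ := hv i
    refine ⟨r * p, ?_⟩
    have : (r • v) i = r • (v i) := rfl
    rw [this, hp, Algebra.smul_def, map_mul, mul_div_assoc]

/-- `V_b ⊆ ℂ(z)^m`: the `ℂ`-span of `z^{−b_1}e_1, …, z^{−b_m}e_m`. -/
def VbR : Submodule ℂ (Rm m) where
  carrier := {v | ∀ i, ∃ c : ℂ, v i = RatFunc.C c / (RatFunc.X ^ (b i))}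
  add_mem' := by
    intro u v hu hv i
    obtain ⟨p, hp⟩ := hu i
    obtain ⟨q, hq⟩ := hv i
    exact ⟨p + q, by rw [map_add, add_div, ← hp, ← hq]; rfl⟩
  zero_mem' := by intro i; exact ⟨0, by simp⟩
  smul_mem' := by
    intro r v hv i
    obtain ⟨c, hc⟩ := hv i
    refine ⟨r * c, ?_⟩
    have h1 : (r • v) i = r • (v i) := rfl
    rw [h1, hc, map_mul, Algebra.smul_def, mul_div_assoc]
    rfl

/-- A concrete model for `D = 𝓛_b/L_0`: coordinates indexed by the basis vectors
`z^{−(k+1)} e_i` (`i : Fin m`, `k : Fin (b i)`). -/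
abbrev Dspace : Type := ((i : Fin m) × Fin (b i)) → ℂ

/-- The map `ℂ(z)^m → D` reading off the Laurent coefficients in the window
`−b_i ≤ d ≤ −1` of each coordinate; on `𝓛_b` it is the quotient map
`𝓛_b → 𝓛_b/L_0 = D` (`u ↦ ū`). -/
def toD : Rm m →ₗ[ℂ] Dspace m b where
  toFun := fun v p => (coeL (v p.1)).coeff (-(p.2 : ℤ) - 1)
  map_add' := by
    intro u v
    funext p
    simp [HahnSeries.coeff_add]
  map_smul' := by
    intro r v
    funext p
    have : (r • v) p.1 = r • (v p.1) := rfl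
    simp [this, HahnSeries.coeff_smul]

/-- The endomorphism `z̄` of `D = 𝓛_b/L_0` induced by multiplication by `z`. -/
def zbar : Module.End ℂ (Dspace m b) where
  toFun := fun u p => if h : (p.2 : ℕ) + 1 < b p.1 then u ⟨p.1, ⟨(p.2 : ℕ) + 1, h⟩⟩ else 0
  map_add' := by
    intro u v
    funext p
    by_cases h : (p.2 : ℕ) + 1 < b p.1 <;> simp [h]
  map_smul' := by
    intro r v
    funext p
    by_cases h : (p.2 : ℕ) + 1 < b p.1 <;> simp [h]

/-- `f̂_1 : D → D`, induced by a linear map `f_1 : D → V_b ⊆ ℂ(z)^m` (composition with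
the identification of `V_b` with a subspace of `D`, implemented by `toD`). -/
def fhat (f1 : Dspace m b →ₗ[ℂ] Rm m) : Module.End ℂ (Dspace m b) :=
  (toD m b) ∘ₗ f1

end

end GrassRat

/-!
`Ψ` is the identity on `L_0`, and on `𝓛_b` it satisfies `z • Ψ u = Ψ (z • u + f_1 ū)`: for each
eigenvalue `e` the inner sum is `f_1 ((z - y)⁻¹ pr_e ū)` expanded at `z = e`, and `pr_e` commutes
with `y`. Since `z • u + f_1 ū ∈ 𝓛_b`, the image `ψ(y)` is a `ℂ[z]`-module.

Lifting `D` back to `𝓛_b` by `z^{-(k+1)} e_i ↦ z^{-(k+1)} e_i` splits `𝓛_b = L_0 ⊕ liftD(D)`, so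
`ψ(y) = L_0 + Ψ(liftD(D))`. At the place at infinity the coordinates of `liftD x` are strictly
proper, and the `i`-th coordinate of `Ψ (liftD x) - liftD x` is even smaller than `z^{-b_i}`,
while a nonzero `i`-th coordinate of `liftD x` is not. Hence `Ψ(liftD(D))` meets the polynomial
vectors `L_0` only in `0` and `Ψ ∘ liftD` is injective, so `ψ(y)/L_0 ≅ D` has dimension `N`.
Finite generation and full rank follow from `L_0 ⊆ ψ(y) ⊆ L_0 + Ψ(liftD(D))`.
-/

open Polynomial

theorem RatFunc.coeff_coe_algebraMap_div_X_pow {F : Type*} [Field F] (p : F[X]) (n : ℕ) (d : ℤ) :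
    ((algebraMap F[X] (RatFunc F) p / RatFunc.X ^ n : RatFunc F) : LaurentSeries F).coeff d =
      if 0 ≤ d + n then p.coeff (d + n).toNat else 0 := by
  have hp : ((algebraMap F[X] (RatFunc F) p : RatFunc F) : LaurentSeries F) =
      ((p : PowerSeries F) : LaurentSeries F) := (RatFunc.coe_coe p).symm
  rw [map_div₀, map_pow, RatFunc.coe_X, hp, ← RatFunc.single_one_eq_pow,
    div_eq_mul_inv, HahnSeries.inv_single, inv_one]
  obtain ⟨j, rfl⟩ : ∃ j, d = j + -(n : ℤ) := ⟨d + n, by ring⟩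
  rw [HahnSeries.coeff_mul_single_add, mul_one, PowerSeries.coeff_coe, neg_add_cancel_right]
  split_ifs with h1 h2 h2
  · omega
  · rfl
  · rw [Polynomial.coeff_coe]
    congr 1
    omega
  · omega

theorem smul_sum_Icc_inv_pow_smul_add {L M : Type*} [Field L] [AddCommGroup M] [Module L M]
    {t : L} (ht : t ≠ 0) (g : ℕ → M) (N : ℕ) :
    t • ∑ k ∈ Finset.Icc 1 N, (t ^ k)⁻¹ • g (k - 1) + (t ^ N)⁻¹ • g N =
      g 0 + ∑ k ∈ Finset.Icc 1 N, (t ^ k)⁻¹ • g k := by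
  induction N with
  | zero => simp
  | succ N ih =>
    rw [Finset.sum_Icc_succ_top (by omega), Finset.sum_Icc_succ_top (by omega), ← add_assoc, ← ih,
      smul_add, smul_smul, Nat.add_sub_cancel, pow_succ, mul_inv, ← mul_assoc, mul_comm t,
      mul_assoc, mul_inv_cancel₀ ht, mul_one]

/-- The sum is `f ((X - y)⁻¹ v)` expanded at `X = e`, and the identity is
`X (X - y)⁻¹ = 1 + (X - y)⁻¹ y`. -/
theorem X_smul_sum_inv_pow_smul {K V M : Type*} [Field K] [AddCommGroup V] [Module K V]
    [AddCommGroup M] [Module K M] [Module (RatFunc K) M] [IsScalarTower K (RatFunc K) M]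
    (f : V →ₗ[K] M) (y : Module.End K V) (e : K) (N : ℕ) {v : V}
    (hv : ((y - e • 1) ^ N) v = 0) :
    (RatFunc.X : RatFunc K) • ∑ k ∈ Finset.Icc 1 N,
        ((RatFunc.X - RatFunc.C e) ^ k)⁻¹ • f (((y - e • 1) ^ (k - 1)) v) =
      f v + ∑ k ∈ Finset.Icc 1 N,
        ((RatFunc.X - RatFunc.C e) ^ k)⁻¹ • f (((y - e • 1) ^ (k - 1)) (y v)) := by
  have ht : (RatFunc.X : RatFunc K) - RatFunc.C e ≠ 0 := by
    rw [← RatFunc.algebraMap_X, ← RatFunc.algebraMap_C, ← map_sub]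
    exact RatFunc.algebraMap_ne_zero (X_sub_C_ne_zero e)
  have hshift := smul_sum_Icc_inv_pow_smul_add ht (fun j => f (((y - e • 1) ^ j) v)) N
  simp only [hv, map_zero, smul_zero, add_zero, pow_zero, Module.End.one_apply] at hshift
  have hy : ∀ k, 1 ≤ k → ((y - e • 1) ^ (k - 1)) (y v) =
      ((y - e • 1) ^ k) v + e • ((y - e • 1) ^ (k - 1)) v := by
    intro k hk
    obtain ⟨j, rfl⟩ := Nat.exists_eq_add_of_le' hk
    rw [Nat.add_sub_cancel, pow_succ, Module.End.mul_apply, ← map_smul, ← map_add]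
    congr 1
    simp
  have hX : ∀ s : M,
      (RatFunc.X : RatFunc K) • s = (RatFunc.X - RatFunc.C e) • s + RatFunc.C e • s :=
    fun s => by rw [← add_smul, sub_add_cancel]
  rw [hX, hshift, add_assoc, Finset.smul_sum, ← Finset.sum_add_distrib]
  congr 1
  refine Finset.sum_congr rfl fun k hk => ?_
  rw [hy k (Finset.mem_Icc.mp hk).1, map_add, map_smul, smul_add, smul_comm,
    ← RatFunc.algebraMap_eq_C, algebraMap_smul]

theorem Module.End.commute_of_sum_eq_one_of_range_le_maxGenEigenspace {K V : Type*} [Field K]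
    [AddCommGroup V] [Module K V] {y : Module.End K V} {E : Finset K} {pr : K → Module.End K V}
    (hsum : ∑ e ∈ E, pr e = 1) (hrange : ∀ e ∈ E, LinearMap.range (pr e) ≤ y.maxGenEigenspace e)
    {e : K} (he : e ∈ E) : Commute (pr e) y := by
  ext v
  have hdecomp : ∀ w : V, ∑ e ∈ E, pr e w = w := fun w => by
    rw [← LinearMap.sum_apply, hsum, Module.End.one_apply]
  refine (iSupIndep_iff_finsetSum_eq_imp_eq _).mp y.independent_maxGenEigenspace E
    (fun e => pr e (y v)) (fun e => y (pr e v)) (fun e he => ⟨hrange e he ⟨_, rfl⟩, ?_⟩) ?_ e he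
  · exact y.mapsTo_maxGenEigenspace_of_comm (Commute.refl y) e (hrange e he ⟨v, rfl⟩)
  · rw [hdecomp, ← map_sum, hdecomp]

theorem Module.End.pow_finrank_sub_smul_one_apply_of_mem_maxGenEigenspace {K V : Type*} [Field K]
    [AddCommGroup V] [Module K V] [FiniteDimensional K V] {y : Module.End K V} {e : K} {v : V}
    (hv : v ∈ y.maxGenEigenspace e) : ((y - e • 1) ^ Module.finrank K V) v = 0 := by
  rwa [Module.End.maxGenEigenspace_eq_genEigenspace_finrank, Module.End.mem_genEigenspace_nat,
    LinearMap.mem_ker] at hv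

def Submodule.ofXStable {K V : Type*} [CommSemiring K] [AddCommMonoid V] [Module K V]
    [Module K[X] V] [IsScalarTower K K[X] V] (p : Submodule K V)
    (hp : ∀ v ∈ p, (X : K[X]) • v ∈ p) : Submodule K[X] V where
  carrier := p
  add_mem' := p.add_mem
  zero_mem' := p.zero_mem
  smul_mem' q v hv := by
    induction q using Polynomial.induction_on' with
    | add q r hq hr => rw [add_smul]; exact p.add_mem hq hr
    | monomial n a =>
      rw [← C_mul_X_pow_eq_monomial, mul_smul, ← algebraMap_eq, algebraMap_smul]
      refine p.smul_mem a ?_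
      induction n with
      | zero => simpa using hv
      | succ n ih => rw [pow_succ', mul_smul]; exact hp _ ih

theorem Submodule.fg_of_restrictScalars_eq_sup {R A M : Type*} [CommSemiring R] [Semiring A]
    [Algebra R A] [AddCommMonoid M] [Module R M] [Module A M] [IsScalarTower R A M]
    {P L : Submodule A M} (hL : L.FG) {W : Submodule R M} (hW : W.FG)
    (h : P.restrictScalars R = L.restrictScalars R ⊔ W) : P.FG := by
  have hP : P = L ⊔ Submodule.span A W := by
    refine le_antisymm (fun v hv => ?_) (sup_le (fun v hv => ?_) (Submodule.span_le.mpr ?_))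
    · obtain ⟨a, ha, w, hw, rfl⟩ := Submodule.mem_sup.mp (h ▸ hv : v ∈ L.restrictScalars R ⊔ W)
      exact Submodule.add_mem_sup ha (Submodule.subset_span hw)
    · exact (h.ge (Submodule.mem_sup_left hv) : v ∈ P.restrictScalars R)
    · exact fun w hw => (h.ge (Submodule.mem_sup_right hw) : w ∈ P.restrictScalars R)
  rw [hP]
  exact hL.sup hW.span

section InftyValuation

-- `inftyValuation F f = exp (deg f)`, so `inftyValuation F f < 1` says that `f` is strictly proper.

open scoped Classical

variable {F : Type*} [Field F]

theorem RatFunc.inftyValuation_algebraMap_div_X_pow {p : F[X]} (hp : p ≠ 0) (n : ℕ) :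
    RatFunc.inftyValuation F (algebraMap F[X] (RatFunc F) p / RatFunc.X ^ n) =
      WithZero.exp ((p.natDegree : ℤ) - n) := by
  rw [map_div₀, map_pow, RatFunc.inftyValuation.X, RatFunc.inftyValuation_apply,
    RatFunc.inftyValuation.polynomial F hp, ← WithZero.exp_nsmul, nsmul_one, WithZero.exp_sub]

theorem RatFunc.eq_zero_of_inftyValuation_algebraMap_div_X_pow_lt {p : F[X]} {n : ℕ}
    (h : RatFunc.inftyValuation F (algebraMap F[X] (RatFunc F) p / RatFunc.X ^ n) <
      WithZero.exp (-(n : ℤ))) : p = 0 := by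
  by_contra hp
  rw [RatFunc.inftyValuation_algebraMap_div_X_pow hp, WithZero.exp_lt_exp] at h
  omega

theorem RatFunc.eq_zero_of_inftyValuation_algebraMap_lt_one {p : F[X]}
    (h : RatFunc.inftyValuation F (algebraMap F[X] (RatFunc F) p) < 1) : p = 0 :=
  eq_zero_of_inftyValuation_algebraMap_div_X_pow_lt (n := 0) (by simpa using h)

theorem RatFunc.inftyValuation_algebraMap_div_X_pow_lt_one {p : F[X]} {n : ℕ}
    (hp : p.degree < n) :
    RatFunc.inftyValuation F (algebraMap F[X] (RatFunc F) p / RatFunc.X ^ n) < 1 := by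
  rcases eq_or_ne p 0 with rfl | hp0
  · simp
  rw [degree_eq_natDegree hp0, Nat.cast_lt] at hp
  rw [RatFunc.inftyValuation_algebraMap_div_X_pow hp0, ← WithZero.exp_zero, WithZero.exp_lt_exp]
  omega

theorem RatFunc.inftyValuation_inv_X_sub_C_pow (e : F) (k : ℕ) :
    RatFunc.inftyValuation F ((RatFunc.X - RatFunc.C e) ^ k)⁻¹ = WithZero.exp (-(k : ℤ)) := by
  rw [← RatFunc.algebraMap_X, ← RatFunc.algebraMap_C, ← map_sub, ← map_pow, map_inv₀,
    RatFunc.inftyValuation_apply,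
    RatFunc.inftyValuation.polynomial F (pow_ne_zero _ (X_sub_C_ne_zero e)), natDegree_pow,
    natDegree_X_sub_C, mul_one, WithZero.exp_neg]

end InftyValuation

namespace GrassRat

variable {m : ℕ} {b : Fin m → ℕ}

theorem polynomial_X_smul_eq (v : Rm m) : (X : ℂ[X]) • v = (RatFunc.X : RatFunc ℂ) • v := by
  rw [← algebraMap_smul (RatFunc ℂ) (X : ℂ[X]) v, RatFunc.algebraMap_X]

theorem finrank_Dspace : Module.finrank ℂ (Dspace m b) = ∑ i, b i := by
  simp

theorem L0R_eq_span : L0R m = Submodule.span ℂ[X] (Set.range fun i => Pi.single i 1) := by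
  refine le_antisymm (fun v hv => ?_) (Submodule.span_le.mpr ?_)
  · choose p hp using hv
    have hv : v = ∑ i, p i • Pi.single i 1 := by
      funext j
      simp [hp j, Finset.sum_apply, Pi.single_apply, Algebra.smul_def]
    rw [hv]
    exact Submodule.sum_mem _ fun i _ => Submodule.smul_mem _ _ (Submodule.subset_span ⟨i, rfl⟩)
  · rintro _ ⟨i, rfl⟩ j
    rcases eq_or_ne j i with rfl | hj
    · exact ⟨1, by simp⟩
    · exact ⟨0, by simp [hj]⟩

theorem L0R_fg : (L0R m).FG :=
  L0R_eq_span ▸ Submodule.fg_span (Set.finite_range _)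

theorem span_L0R_eq_top : Submodule.span (RatFunc ℂ) (L0R m : Set (Rm m)) = ⊤ := by
  rw [L0R_eq_span, Submodule.span_span_of_tower]
  convert (Pi.basisFun (RatFunc ℂ) (Fin m)).span_eq using 3
  funext i
  exact (Pi.basisFun_apply _ _ i).symm

theorem algebraMap_eq_algebraMap_mul_X_pow_div (q : ℂ[X]) (n : ℕ) :
    algebraMap ℂ[X] (RatFunc ℂ) q = algebraMap ℂ[X] (RatFunc ℂ) (q * X ^ n) / RatFunc.X ^ n := by
  rw [map_mul, map_pow, RatFunc.algebraMap_X,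
    mul_div_cancel_right₀ _ (pow_ne_zero _ RatFunc.X_ne_zero)]

theorem L0R_le_LbR : L0R m ≤ LbR m b := fun u hu i => by
  obtain ⟨q, hq⟩ := hu i
  exact ⟨q * X ^ b i, hq.trans (algebraMap_eq_algebraMap_mul_X_pow_div q _)⟩

theorem mem_LbR_of_mem_VbR {u : Rm m} (hu : u ∈ VbR m b) : u ∈ LbR m b := fun i => by
  obtain ⟨c, hc⟩ := hu i
  exact ⟨C c, by rw [hc, RatFunc.algebraMap_C]⟩

theorem toD_apply_of_eq_div {u : Rm m} {i : Fin m} {p : ℂ[X]}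
    (h : u i = algebraMap ℂ[X] (RatFunc ℂ) p / RatFunc.X ^ b i) (k : Fin (b i)) :
    toD m b u ⟨i, k⟩ = p.coeff (b i - 1 - k) := by
  show ((u i : RatFunc ℂ) : LaurentSeries ℂ).coeff (-(k : ℤ) - 1) = _
  rw [h, RatFunc.coeff_coe_algebraMap_div_X_pow, if_pos (by omega)]
  congr 1
  omega

theorem toD_eq_zero_of_mem_L0R {u : Rm m} (hu : u ∈ L0R m) : toD m b u = 0 := by
  funext ⟨i, k⟩
  obtain ⟨q, hq⟩ := hu i
  rw [toD_apply_of_eq_div (hq.trans (algebraMap_eq_algebraMap_mul_X_pow_div q (b i))),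
    coeff_mul_X_pow', if_neg (by omega)]
  rfl

theorem mem_L0R_of_mem_LbR_of_toD_eq_zero {u : Rm m} (hu : u ∈ LbR m b) (h : toD m b u = 0) :
    u ∈ L0R m := fun i => by
  obtain ⟨p, hp⟩ := hu i
  obtain ⟨q, rfl⟩ : X ^ b i ∣ p := X_pow_dvd_iff.mpr fun d hd => by
    have := congrFun h ⟨i, ⟨b i - 1 - d, by omega⟩⟩
    rwa [toD_apply_of_eq_div hp, show b i - 1 - (b i - 1 - d) = d by omega] at this
  exact ⟨q, by rw [hp, mul_comm, ← algebraMap_eq_algebraMap_mul_X_pow_div]⟩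

theorem toD_X_smul {u : Rm m} (hu : u ∈ LbR m b) :
    toD m b ((X : ℂ[X]) • u) = zbar m b (toD m b u) := by
  funext ⟨i, k⟩
  obtain ⟨p, hp⟩ := hu i
  have hXu : ((X : ℂ[X]) • u) i = algebraMap ℂ[X] (RatFunc ℂ) (X * p) / RatFunc.X ^ b i := by
    rw [Pi.smul_apply, Algebra.smul_def, hp, map_mul, mul_div_assoc]
  rw [toD_apply_of_eq_div hXu]
  show _ = if h : (k : ℕ) + 1 < b i then toD m b u ⟨i, ⟨k + 1, h⟩⟩ else 0
  split_ifs with h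
  · rw [toD_apply_of_eq_div hp, show b i - 1 - k = (b i - 1 - (k + 1)) + 1 by omega, coeff_X_mul]
  · rw [show b i - 1 - k = 0 by omega, coeff_X_mul_zero]

-- `liftD` is the section of `toD` on `𝓛_b` sending the class of `z^{-(k+1)} e_i` to
-- `z^{-(k+1)} e_i`.
noncomputable def liftDNum (x : Dspace m b) (i : Fin m) : ℂ[X] :=
  ∑ k : Fin (b i), C (x ⟨i, k⟩) * X ^ (b i - 1 - k)

theorem coeff_liftDNum (x : Dspace m b) (i : Fin m) (k : Fin (b i)) :
    (liftDNum x i).coeff (b i - 1 - k) = x ⟨i, k⟩ := by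
  rw [liftDNum, finsetSum_coeff, Finset.sum_eq_single k]
  · simp
  · intro j _ hj
    rw [coeff_C_mul_X_pow, if_neg fun h => hj (Fin.ext (by omega))]
  · simp

theorem degree_liftDNum_lt (x : Dspace m b) (i : Fin m) : (liftDNum x i).degree < b i := by
  rw [← mem_degreeLT]
  exact Submodule.sum_mem _ fun k _ => mem_degreeLT.mpr
    ((degree_C_mul_X_pow_le _ _).trans_lt (by exact_mod_cast (by omega : b i - 1 - k < b i)))

variable (m b) in
noncomputable def liftD : Dspace m b →ₗ[ℂ] Rm m where
  toFun x i := algebraMap ℂ[X] (RatFunc ℂ) (liftDNum x i) / RatFunc.X ^ b i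
  map_add' x x' := by
    funext i
    simp [liftDNum, add_mul, Finset.sum_add_distrib, add_div]
  map_smul' c x := by
    funext i
    simp [liftDNum, Finset.mul_sum, mul_assoc, Finset.sum_div, RatFunc.smul_eq_C_mul, mul_div_assoc]

theorem liftD_mem_LbR (x : Dspace m b) : liftD m b x ∈ LbR m b := fun i => ⟨liftDNum x i, rfl⟩

theorem toD_liftD (x : Dspace m b) : toD m b (liftD m b x) = x := by
  funext ⟨i, k⟩
  rw [toD_apply_of_eq_div rfl, coeff_liftDNum]

open scoped Classical in
theorem inftyValuation_liftD_apply_lt_one (x : Dspace m b) (i : Fin m) :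
    RatFunc.inftyValuation ℂ (liftD m b x i) < 1 :=
  RatFunc.inftyValuation_algebraMap_div_X_pow_lt_one (degree_liftDNum_lt x i)

theorem LbR_restrictScalars_eq :
    (LbR m b).restrictScalars ℂ = (L0R m).restrictScalars ℂ ⊔ LinearMap.range (liftD m b) := by
  refine le_antisymm (fun u hu => ?_) (sup_le (fun u hu => L0R_le_LbR hu) ?_)
  · have hrest : u - liftD m b (toD m b u) ∈ L0R m :=
      mem_L0R_of_mem_LbR_of_toD_eq_zero (sub_mem hu (liftD_mem_LbR _)) (by simp [toD_liftD])
    rw [← sub_add_cancel u (liftD m b (toD m b u))]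
    exact Submodule.add_mem_sup hrest ⟨_, rfl⟩
  · rintro _ ⟨x, rfl⟩
    exact liftD_mem_LbR x

section Psi

variable (N : ℕ) (f1 : Dspace m b →ₗ[ℂ] Rm m) (y : Module.End ℂ (Dspace m b)) (E : Finset ℂ)
  (pr : ℂ → Module.End ℂ (Dspace m b))

variable (m b) in
noncomputable def psi : Rm m →ₗ[ℂ] Rm m where
  toFun u := u + ∑ e ∈ E, ∑ k ∈ Finset.Icc 1 N,
    ((RatFunc.X - RatFunc.C e) ^ k)⁻¹ • f1 (((y - e • 1) ^ (k - 1)) (pr e (toD m b u)))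
  map_add' u v := by
    simp only [map_add, smul_add, Finset.sum_add_distrib]
    abel
  map_smul' c u := by
    simp only [map_smul, RingHom.id_apply, smul_add, Finset.smul_sum, smul_comm c]

local notation "Ψ" => psi m b N f1 y E pr

theorem psi_apply (u : Rm m) : Ψ u = u + ∑ e ∈ E, ∑ k ∈ Finset.Icc 1 N,
    ((RatFunc.X - RatFunc.C e) ^ k)⁻¹ • f1 (((y - e • 1) ^ (k - 1)) (pr e (toD m b u))) :=
  rfl

theorem psi_eq_self_of_mem_L0R {u : Rm m} (hu : u ∈ L0R m) : Ψ u = u := by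
  simp [psi_apply, toD_eq_zero_of_mem_L0R hu]

theorem X_smul_psi (hN : N = ∑ i, b i) (hy : y = zbar m b + fhat m b f1)
    (hsum : ∑ e ∈ E, pr e = 1)
    (hrange : ∀ e ∈ E, LinearMap.range (pr e) ≤ y.maxGenEigenspace e)
    {u : Rm m} (hu : u ∈ LbR m b) :
    (X : ℂ[X]) • Ψ u = Ψ ((X : ℂ[X]) • u + f1 (toD m b u)) := by
  have htoD : toD m b ((X : ℂ[X]) • u + f1 (toD m b u)) = y (toD m b u) := by
    rw [map_add, toD_X_smul hu, hy]
    rfl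
  have hprincipal : ∀ e ∈ E, (RatFunc.X : RatFunc ℂ) • ∑ k ∈ Finset.Icc 1 N,
      ((RatFunc.X - RatFunc.C e) ^ k)⁻¹ • f1 (((y - e • 1) ^ (k - 1)) (pr e (toD m b u))) =
      f1 (pr e (toD m b u)) + ∑ k ∈ Finset.Icc 1 N,
      ((RatFunc.X - RatFunc.C e) ^ k)⁻¹ • f1 (((y - e • 1) ^ (k - 1)) (pr e (y (toD m b u)))) := by
    intro e he
    have hnil : ((y - e • 1) ^ N) (pr e (toD m b u)) = 0 := by
      rw [hN, ← finrank_Dspace]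
      exact Module.End.pow_finrank_sub_smul_one_apply_of_mem_maxGenEigenspace (hrange e he ⟨_, rfl⟩)
    rw [X_smul_sum_inv_pow_smul f1 y e N hnil, ← Module.End.mul_apply,
      ← (Module.End.commute_of_sum_eq_one_of_range_le_maxGenEigenspace hsum hrange he).eq]
    rfl
  rw [psi_apply, psi_apply, htoD, polynomial_X_smul_eq, polynomial_X_smul_eq, smul_add,
    Finset.smul_sum, Finset.sum_congr rfl hprincipal, Finset.sum_add_distrib, ← map_sum,
    ← LinearMap.sum_apply, hsum, Module.End.one_apply, add_assoc]

open scoped Classical in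
theorem inftyValuation_psi_sub_self_apply_lt (hf1 : ∀ w, f1 w ∈ VbR m b) (u : Rm m) (i : Fin m) :
    RatFunc.inftyValuation ℂ ((Ψ u - u) i) < WithZero.exp (-(b i : ℤ)) := by
  rw [psi_apply, add_sub_cancel_left, Finset.sum_apply]
  refine Valuation.map_sum_lt _ WithZero.exp_ne_zero fun e _ => ?_
  rw [Finset.sum_apply]
  refine Valuation.map_sum_lt _ WithZero.exp_ne_zero fun k hk => ?_
  obtain ⟨c, hc⟩ := hf1 (((y - e • 1) ^ (k - 1)) (pr e (toD m b u))) i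
  rw [Pi.smul_apply, hc, smul_eq_mul, map_mul, map_div₀, RatFunc.inftyValuation_inv_X_sub_C_pow,
    map_pow, RatFunc.inftyValuation.X, ← RatFunc.algebraMap_eq_C]
  have hC := Valuation.IsTrivialOn.valuation_algebraMap_le_one (RatFunc.inftyValuation ℂ) c
  have hk : 1 ≤ k := (Finset.mem_Icc.mp hk).1
  calc _ ≤ WithZero.exp (-(k : ℤ)) * (1 / WithZero.exp 1 ^ b i) := by
        gcongr
        exact zero_le
    _ < WithZero.exp (-(b i : ℤ)) := by
      rw [← WithZero.exp_nsmul, one_div, ← WithZero.exp_neg, ← WithZero.exp_add,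
        WithZero.exp_lt_exp, nsmul_one]
      omega

theorem psi_comp_liftD_injective (hf1 : ∀ w, f1 w ∈ VbR m b) :
    Function.Injective (Ψ ∘ₗ liftD m b) := by
  classical
  refine (injective_iff_map_eq_zero _).mpr fun x hx => ?_
  have hnum : ∀ i, liftDNum x i = 0 := fun i => by
    refine RatFunc.eq_zero_of_inftyValuation_algebraMap_div_X_pow_lt (n := b i) ?_
    have hneg : liftD m b x i = -((Ψ (liftD m b x) - liftD m b x) i) := by
      rw [LinearMap.comp_apply] at hx
      simp [hx]
    rw [show algebraMap ℂ[X] (RatFunc ℂ) (liftDNum x i) / RatFunc.X ^ b i = liftD m b x i from rfl,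
      hneg, Valuation.map_neg]
    exact inftyValuation_psi_sub_self_apply_lt N f1 y E pr hf1 _ i
  funext ⟨i, k⟩
  rw [← coeff_liftDNum x i k, hnum, coeff_zero]
  rfl

theorem range_psi_comp_liftD_inf_L0R_eq_bot (hf1 : ∀ w, f1 w ∈ VbR m b) :
    LinearMap.range (Ψ ∘ₗ liftD m b) ⊓ (L0R m).restrictScalars ℂ = ⊥ := by
  classical
  refine eq_bot_iff.mpr ?_
  rintro _ ⟨⟨x, rfl⟩, hL0⟩
  refine (Submodule.mem_bot ℂ).mpr (funext fun i => ?_)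
  obtain ⟨q, hq⟩ := hL0 i
  have hlt : RatFunc.inftyValuation ℂ ((Ψ ∘ₗ liftD m b) x i) < 1 := by
    rw [LinearMap.comp_apply, ← add_sub_cancel (liftD m b x) (Ψ (liftD m b x)), Pi.add_apply]
    refine Valuation.map_add_lt _ (inftyValuation_liftD_apply_lt_one x i) ?_
    refine (inftyValuation_psi_sub_self_apply_lt N f1 y E pr hf1 _ i).trans_le ?_
    rw [← WithZero.exp_zero, WithZero.exp_le_exp]
    omega
  rw [hq] at hlt ⊢
  rw [RatFunc.eq_zero_of_inftyValuation_algebraMap_lt_one hlt, map_zero]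
  rfl

theorem map_psi_LbR :
    ((LbR m b).restrictScalars ℂ).map Ψ =
      (L0R m).restrictScalars ℂ ⊔ LinearMap.range (Ψ ∘ₗ liftD m b) := by
  rw [LbR_restrictScalars_eq, Submodule.map_sup, LinearMap.range_comp]
  congr 1
  ext v
  constructor
  · rintro ⟨u, hu, rfl⟩
    rwa [psi_eq_self_of_mem_L0R N f1 y E pr hu]
  · exact fun hv => ⟨v, hv, psi_eq_self_of_mem_L0R N f1 y E pr hv⟩

end Psi

variable (m b) in
theorem stmt15 (N : ℕ) (hN : N = ∑ i, b i)
    (f1 : Dspace m b →ₗ[ℂ] Rm m) (hf1 : ∀ w, f1 w ∈ VbR m b)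
    (y : Module.End ℂ (Dspace m b)) (hy : y = zbar m b + fhat m b f1)
    (E : Finset ℂ)
    (pr : ℂ → Module.End ℂ (Dspace m b))
    (hsum : ∑ e ∈ E, pr e = 1)
    (hrange : ∀ e ∈ E, LinearMap.range (pr e) ≤ Module.End.maxGenEigenspace y e) :
    ∃ M : Submodule (Polynomial ℂ) (Rm m),
      (M : Set (Rm m)) =
        (fun u => u + ∑ e ∈ E, ∑ k ∈ Finset.Icc 1 N,
            ((RatFunc.X - RatFunc.C e) ^ k)⁻¹ •
              (f1 ((((y - e • 1) ^ (k - 1)) : Module.End ℂ (Dspace m b))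
                ((pr e) (toD m b u)))))
          '' ((LbR m b : Submodule (Polynomial ℂ) (Rm m)) : Set (Rm m))
      ∧ M.FG
      ∧ Submodule.span (RatFunc ℂ) (M : Set (Rm m)) = ⊤
      ∧ L0R m ≤ M
      ∧ ∃ W : Submodule ℂ (Rm m), FiniteDimensional ℂ ↥W
          ∧ Module.finrank ℂ ↥W = N
          ∧ W ⊓ (Submodule.restrictScalars ℂ (L0R m)) = ⊥
          ∧ (Submodule.restrictScalars ℂ (L0R m)) ⊔ W = Submodule.restrictScalars ℂ M := by
  let P := ((LbR m b).restrictScalars ℂ).map (psi m b N f1 y E pr)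
  have hX : ∀ v ∈ P, (X : ℂ[X]) • v ∈ P := by
    rintro _ ⟨u, hu, rfl⟩
    exact ⟨_, (LbR m b).add_mem ((LbR m b).smul_mem X hu) (mem_LbR_of_mem_VbR (hf1 _)),
      (X_smul_psi N f1 y E pr hN hy hsum hrange hu).symm⟩
  have hP := map_psi_LbR (m := m) (b := b) N f1 y E pr
  have hL0 : L0R m ≤ P.ofXStable hX :=
    fun v hv => ⟨v, L0R_le_LbR hv, psi_eq_self_of_mem_L0R N f1 y E pr hv⟩
  refine ⟨P.ofXStable hX, rfl,
    Submodule.fg_of_restrictScalars_eq_sup L0R_fg (Module.Finite.iff_fg.mp inferInstance) hP,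
    eq_top_mono (Submodule.span_mono hL0) span_L0R_eq_top, hL0,
    LinearMap.range (psi m b N f1 y E pr ∘ₗ liftD m b), inferInstance, ?_,
    range_psi_comp_liftD_inf_L0R_eq_bot N f1 y E pr hf1, hP.symm⟩
  rw [LinearMap.finrank_range_of_inj (psi_comp_liftD_injective N f1 y E pr hf1), finrank_Dspace,
    hN]

end GrassRat
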